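/- Fix t > 0 and x ∈ ℝ, and let g_n = (c_n x + d_n)^{1/t} for n large enough that c_n x + d_n > 0 (with c_n, d_n as specified for the two cases t ≠ 2 and t = 2). Then for every α ≥ 6, (1 − Φ(g_n))^{n−1} = o(b_n^{−α}) as n → ∞, i.e. b_n^{α} (1 − Φ(g_n))^{n−1} → 0. -/
import Mathlib


open Real Filter Topology

/-- The standard normal distribution function. -/
noncomputable def stdNormalCDF (x : ℝ) : ℝ :=
  ∫ u in Set.Iic x, Real.exp (-u ^ 2 / 2) / Real.sqrt (2 * Real.pi)

lemma stdNormal_fun_eq :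
    (fun u : ℝ => Real.exp (-u ^ 2 / 2) / Real.sqrt (2 * Real.pi))
      = fun u : ℝ => Real.exp (-(1/2) * u ^ 2) / Real.sqrt (2 * Real.pi) := by
  funext u; ring_nf

lemma stdNormal_integrable :
    MeasureTheory.Integrable
      (fun u : ℝ => Real.exp (-u ^ 2 / 2) / Real.sqrt (2 * Real.pi)) := by
  rw [stdNormal_fun_eq]
  exact (integrable_exp_neg_mul_sq (by norm_num)).div_const _

lemma stdNormal_nonneg (u : ℝ) :
    0 ≤ Real.exp (-u ^ 2 / 2) / Real.sqrt (2 * Real.pi) :=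
  div_nonneg (Real.exp_pos _).le (Real.sqrt_nonneg _)

lemma stdNormal_total :
    (∫ u : ℝ, Real.exp (-u ^ 2 / 2) / Real.sqrt (2 * Real.pi)) = 1 := by
  rw [stdNormal_fun_eq, MeasureTheory.integral_div, integral_gaussian,
    div_eq_one_iff_eq (by positivity)]
  congr 1
  rw [div_div_eq_mul_div, div_one, mul_comm]

lemma stdNormalCDF_zero : stdNormalCDF 0 = 1 / 2 := by
  have hInt := stdNormal_integrable
  set f : ℝ → ℝ := fun u => Real.exp (-u ^ 2 / 2) / Real.sqrt (2 * Real.pi) with hf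
  have heven : ∀ u : ℝ, f (-u) = f u := by
    intro u; simp [hf, neg_pow]
  have h1 : (∫ u in Set.Iic (0:ℝ), f u) = ∫ u in Set.Ioi (0:ℝ), f u := by
    have h := integral_comp_neg_Iic (0:ℝ) f
    rw [neg_zero] at h
    rw [← h]
    exact (MeasureTheory.integral_congr_ae
      (Filter.Eventually.of_forall fun u => heven u)).symm
  have h2 : (∫ u in Set.Iic (0:ℝ), f u) + (∫ u in Set.Ioi (0:ℝ), f u) = ∫ u, f u :=
    intervalIntegral.integral_Iic_add_Ioi hInt.integrableOn hInt.integrableOn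
  rw [stdNormal_total] at h2
  have h3 : stdNormalCDF 0 = ∫ u in Set.Iic (0:ℝ), f u := rfl
  rw [h3]
  linarith

lemma stdNormalCDF_le_one (y : ℝ) : stdNormalCDF y ≤ 1 := by
  rw [← stdNormal_total]
  exact MeasureTheory.setIntegral_le_integral stdNormal_integrable
    (Filter.Eventually.of_forall stdNormal_nonneg)

lemma stdNormalCDF_half_le {y : ℝ} (hy : 0 ≤ y) : 1 / 2 ≤ stdNormalCDF y := by
  rw [← stdNormalCDF_zero]
  exact MeasureTheory.setIntegral_mono_set stdNormal_integrable.integrableOn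
    (Filter.Eventually.of_forall stdNormal_nonneg)
    ((Set.Iic_subset_Iic.2 hy).eventuallyLE)

/-- With `b_n` the unique positive solution of `2π b_n² exp(b_n²) = n²`,
`c_n = t b_n^{t−2}`, `d_n = b_n^t` for `t ≠ 2` and `c_n = 2 − 2b_n^{−2}`,
`d_n = b_n² − 2b_n^{−2}` for `t = 2`, and `g_n = (c_n x + d_n)^{1/t}`:
for every `α ≥ 6`, `(1 − Φ(g_n))^{n−1} = o(b_n^{−α})`, i.e.
`b_n^α (1 − Φ(g_n))^{n−1} → 0`. -/
theorem powered_extremes_lower_tail_negligible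
    (b : ℕ → ℝ)
    (hb : ∀ n : ℕ, 1 ≤ n → 0 < b n ∧
      2 * Real.pi * (b n) ^ 2 * Real.exp ((b n) ^ 2) = (n : ℝ) ^ 2)
    (t : ℝ) (ht : 0 < t) (x : ℝ)
    (c d g : ℕ → ℝ)
    (hc : ∀ n : ℕ, c n = if t = 2 then 2 - 2 / (b n) ^ 2 else t * b n ^ (t - 2))
    (hd : ∀ n : ℕ, d n = if t = 2 then (b n) ^ 2 - 2 / (b n) ^ 2 else b n ^ t)
    (hg : ∀ n : ℕ, g n = (c n * x + d n) ^ (1 / t)) :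
    ∀ α : ℝ, 6 ≤ α →
      Tendsto (fun n : ℕ => b n ^ α * (1 - stdNormalCDF (g n)) ^ (n - 1))
        atTop (𝓝 0) := by
  intro α hα
  -- b tends to infinity
  have hbtop : ∀ M : ℝ, ∀ᶠ n in atTop, M < b n := by
    intro M
    rcases le_or_gt M 0 with hM | hM
    · filter_upwards [eventually_ge_atTop 1] with n hn
      exact lt_of_le_of_lt hM (hb n hn).1
    · have hsq : Tendsto (fun n : ℕ => (n : ℝ) ^ 2) atTop atTop :=
        (tendsto_pow_atTop two_ne_zero).comp tendsto_natCast_atTop_atTop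
      filter_upwards [hsq.eventually_gt_atTop (2 * Real.pi * M ^ 2 * Real.exp (M ^ 2)),
        eventually_ge_atTop 1] with n hn hn1
      by_contra h
      push_neg at h
      obtain ⟨hbpos, heq⟩ := hb n hn1
      have h1 : (b n) ^ 2 ≤ M ^ 2 := by nlinarith
      have h2 : Real.exp ((b n) ^ 2) ≤ Real.exp (M ^ 2) := Real.exp_le_exp.2 h1
      have h3 : (n : ℝ) ^ 2 ≤ 2 * Real.pi * M ^ 2 * Real.exp (M ^ 2) := by
        rw [← heq]
        have hp := Real.pi_pos
        nlinarith [mul_le_mul h1 h2 (Real.exp_pos ((b n) ^ 2)).le (sq_nonneg M),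
          Real.exp_pos ((b n) ^ 2)]
      exact absurd hn (not_lt.2 h3)
  -- eventually g n ≥ 0
  have hgnn : ∀ᶠ n in atTop, 0 ≤ g n := by
    filter_upwards [hbtop (1 + 2 + 2 * |x| + |t * x|), eventually_ge_atTop 1]
      with n hn hn1
    obtain ⟨hbpos, _⟩ := hb n hn1
    have hax := abs_nonneg x
    have hatx := abs_nonneg (t * x)
    have hb1 : (1 : ℝ) ≤ b n := by linarith
    have hcd : 0 ≤ c n * x + d n := by
      rw [hc n, hd n]
      by_cases ht2 : t = 2
      · simp only [ht2, if_true, if_pos]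
        set s := 2 / (b n) ^ 2 with hs
        have hs0 : 0 < s := by positivity
        have hs2 : s ≤ 2 := by
          rw [hs, div_le_iff₀ (by positivity)]
          nlinarith
        have hB : 2 + 2 * |x| ≤ (b n) ^ 2 := by nlinarith
        nlinarith [mul_nonneg (show (0:ℝ) ≤ 2 - s by linarith)
            (show (0:ℝ) ≤ |x| + x by linarith [neg_abs_le x]),
          mul_nonneg hs0.le (abs_nonneg x)]
      · simp only [ht2, if_false]
        have hsplit : b n ^ t = b n ^ (t - 2) * b n ^ 2 := by
          rw [show t = (t - 2) + 2 by ring, Real.rpow_add hbpos]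
          rw [Real.rpow_two]
          ring_nf
        have hr : 0 ≤ b n ^ (t - 2) := Real.rpow_nonneg hbpos.le _
        have hkey : 0 ≤ t * x + b n ^ 2 := by
          nlinarith [neg_abs_le (t * x)]
        rw [hsplit]
        nlinarith [mul_nonneg hr hkey]
    rw [hg n]
    exact Real.rpow_nonneg hcd _
  set k := ⌈α⌉₊ with hkdef
  have hk : α ≤ (k : ℝ) := Nat.le_ceil α
  have hlim : Tendsto (fun n : ℕ => 2 * ((n : ℝ) ^ k * (1/2 : ℝ) ^ n)) atTop (𝓝 0) := by
    have h := tendsto_pow_const_mul_const_pow_of_lt_one k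
      (by norm_num : (0:ℝ) ≤ 1/2) (by norm_num : (1/2:ℝ) < 1)
    simpa using h.const_mul 2
  refine squeeze_zero' ?_ ?_ hlim
  · filter_upwards [eventually_ge_atTop 1] with n hn1
    have hbpos := (hb n hn1).1
    have hΦ := stdNormalCDF_le_one (g n)
    exact mul_nonneg (Real.rpow_nonneg hbpos.le _) (pow_nonneg (by linarith) _)
  · filter_upwards [hgnn, eventually_ge_atTop 1] with n hgn hn1
    obtain ⟨hbpos, heq⟩ := hb n hn1
    have hn1' : (1 : ℝ) ≤ (n : ℝ) := by exact_mod_cast hn1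
    have hbn : b n ≤ (n : ℝ) := by
      have hexp : 1 ≤ Real.exp ((b n) ^ 2) := Real.one_le_exp (sq_nonneg _)
      have hsq : (b n) ^ 2 ≤ (n : ℝ) ^ 2 := by
        nlinarith [mul_le_mul_of_nonneg_left hexp
            (show (0:ℝ) ≤ 2 * Real.pi * (b n) ^ 2 by positivity),
          mul_nonneg (show (0:ℝ) ≤ 2 * Real.pi - 2 by nlinarith [Real.pi_gt_three])
            (sq_nonneg (b n))]
      nlinarith
    have h1 : b n ^ α ≤ (n : ℝ) ^ α := Real.rpow_le_rpow hbpos.le hbn (by linarith)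
    have h2 : (n : ℝ) ^ α ≤ (n : ℝ) ^ (k : ℝ) := Real.rpow_le_rpow_of_exponent_le hn1' hk
    have h2' : (n : ℝ) ^ (k : ℝ) = (n : ℝ) ^ k := Real.rpow_natCast _ _
    have hΦ1 := stdNormalCDF_le_one (g n)
    have hΦ2 := stdNormalCDF_half_le hgn
    have h3 : (1 - stdNormalCDF (g n)) ^ (n - 1) ≤ (1/2 : ℝ) ^ (n - 1) :=
      pow_le_pow_left₀ (by linarith) (by linarith) _
    have h4 : ((1:ℝ)/2) ^ (n - 1) = 2 * (1/2 : ℝ) ^ n := by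
      have h5 : ((1:ℝ)/2) ^ n = (1/2 : ℝ) ^ (n - 1) * (1/2) := by
        rw [← pow_succ, Nat.sub_add_cancel hn1]
      linarith
    calc b n ^ α * (1 - stdNormalCDF (g n)) ^ (n - 1)
        ≤ (n : ℝ) ^ k * ((1/2 : ℝ) ^ (n - 1)) := by
          exact mul_le_mul (by rw [← h2']; exact h1.trans h2) h3
            (pow_nonneg (by linarith) _) (by positivity)
      _ = 2 * ((n : ℝ) ^ k * (1/2 : ℝ) ^ n) := by rw [h4]; ring
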